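/- Let μ₁ and μ₂ be Borel probability measures on ℝ with finite first moments, and assume each μᵢ has no singular continuous part, i.e. μᵢ is the sum of a purely atomic measure (a countable weighted sum of Dirac measures) and a measure absolutely continuous with respect to Lebesgue measure. Then sup{ ∫ f dμ₁ − ∫ f dμ₂ : f : ℝ → ℝ 1-Lipschitz and integrable with respect to both } = ∫_ℝ |F₁(z) − F₂(z)| dz, where Fᵢ(z) = μᵢ((−∞, z]) is the cumulative distribution function of μᵢ. -/

import Mathlib

/-!
For measurable `g` with `|g| ≤ 1` let `G x = ∫ t in 0..x, g t = ∫ g t * (1_{t ≤ x} - 1_{t ≤ 0}) dt`.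
The kernel is integrable on `μ × volume` because `μ` has a finite first moment, so Fubini gives
`∫ G dμ = ∫ g t * (μ [t, ∞) - 1_{t ≤ 0}) dt`; as `μ [t, ∞) = 1 - F t` off the countably many atoms
of `μ`, `∫ G dμ₁ - ∫ G dμ₂ = ∫ g (F₂ - F₁)`. A 1-Lipschitz `f` is absolutely continuous, so
`f = f 0 + G` for `g = f'`, which bounds the supremum by `∫ |F₁ - F₂|`; the sign of `F₂ - F₁`
taken as `g` attains it.
-/

open MeasureTheory Set

noncomputable def primitiveKernel (x t : ℝ) : ℝ :=
  (if t ≤ x then 1 else 0) - if t ≤ 0 then 1 else 0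

lemma measurable_primitiveKernel : Measurable (Function.uncurry primitiveKernel) :=
  (Measurable.ite (measurableSet_le measurable_snd measurable_fst) measurable_const
    measurable_const).sub
    (Measurable.ite (measurableSet_le measurable_snd measurable_const) measurable_const
      measurable_const)

lemma abs_primitiveKernel (x t : ℝ) : |primitiveKernel x t| = (uIoc 0 x).indicator 1 t := by
  classical
  simp only [primitiveKernel, indicator_apply, mem_uIoc, Pi.one_apply]
  split_ifs <;> grind

lemma intervalIntegral_eq_integral_mul_primitiveKernel (g : ℝ → ℝ) (x : ℝ) :
    ∫ t in (0 : ℝ)..x, g t = ∫ t, g t * primitiveKernel x t := by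
  classical
  rcases le_total 0 x with hx | hx
  · rw [intervalIntegral.integral_of_le hx, ← integral_indicator measurableSet_Ioc]
    congr 1 with t
    simp only [primitiveKernel, indicator_apply, mem_Ioc]
    split_ifs <;> grind
  · rw [intervalIntegral.integral_of_ge hx, ← integral_indicator measurableSet_Ioc,
      ← integral_neg]
    congr 1 with t
    simp only [primitiveKernel, indicator_apply, mem_Ioc]
    split_ifs <;> grind

lemma integral_primitiveKernel (μ : Measure ℝ) [IsFiniteMeasure μ] (t : ℝ) :
    ∫ x, primitiveKernel x t ∂μ = μ.real (Ici t) - if t ≤ 0 then μ.real univ else 0 := by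
  have hind : (fun x => if t ≤ x then (1 : ℝ) else 0) = (Ici t).indicator 1 := by
    ext x
    simp [indicator_apply]
  unfold primitiveKernel
  rw [integral_sub (by rw [hind]; exact (integrable_const 1).indicator measurableSet_Ici)
    (integrable_const _), hind, integral_indicator_one measurableSet_Ici, integral_const]
  split_ifs <;> simp

lemma integrable_mul_primitiveKernel {μ : Measure ℝ} [SFinite μ]
    (hm : Integrable (fun x => |x|) μ) {g : ℝ → ℝ} (hg : AEStronglyMeasurable g volume)
    {C : ℝ} (hb : ∀ t, |g t| ≤ C) :
    Integrable (fun p : ℝ × ℝ => g p.2 * primitiveKernel p.1 p.2) (μ.prod volume) := by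
  set S : Set (ℝ × ℝ) := {p | p.2 ∈ uIoc 0 p.1}
  have hS : MeasurableSet S :=
    (measurableSet_lt (measurable_const.min measurable_fst) measurable_snd).inter
      (measurableSet_le measurable_snd (measurable_const.max measurable_fst))
  have hS_lt_top : μ.prod volume S < ⊤ := by
    rw [Measure.prod_apply hS]
    calc ∫⁻ x, volume (Prod.mk x ⁻¹' S) ∂μ = ∫⁻ x, ENNReal.ofReal |x| ∂μ := by
          congr 1 with x
          simp [S, Real.volume_uIoc]
      _ < ⊤ := hm.lintegral_lt_top
  refine Integrable.mono' ((integrable_indicator_iff hS).2 (integrableOn_const hS_lt_top.ne))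
    (hg.comp_snd.mul measurable_primitiveKernel.aestronglyMeasurable) (ae_of_all _ fun p => ?_)
  rw [Real.norm_eq_abs, abs_mul, abs_primitiveKernel]
  by_cases hp : p ∈ S
  · simpa [indicator_of_mem hp, indicator_of_mem (show p.2 ∈ uIoc 0 p.1 from hp)] using hb p.2
  · simp [indicator_of_notMem hp, indicator_of_notMem (show p.2 ∉ uIoc 0 p.1 from hp)]

theorem integral_primitive_eq_integral_mul_tail (μ : Measure ℝ) [IsFiniteMeasure μ]
    (hm : Integrable (fun x => |x|) μ) {g : ℝ → ℝ} (hg : AEStronglyMeasurable g volume)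
    {C : ℝ} (hb : ∀ t, |g t| ≤ C) :
    Integrable (fun t => g t * (μ.real (Ici t) - if t ≤ 0 then μ.real univ else 0)) ∧
      ∫ x, (∫ t in (0 : ℝ)..x, g t) ∂μ =
        ∫ t, g t * (μ.real (Ici t) - if t ≤ 0 then μ.real univ else 0) := by
  have hint := integrable_mul_primitiveKernel hm hg hb
  have hinner (t : ℝ) : ∫ x, g t * primitiveKernel x t ∂μ =
      g t * (μ.real (Ici t) - if t ≤ 0 then μ.real univ else 0) := by
    rw [integral_const_mul, integral_primitiveKernel]
  refine ⟨hint.integral_prod_right.congr (ae_of_all _ hinner), ?_⟩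
  calc ∫ x, (∫ t in (0 : ℝ)..x, g t) ∂μ
      = ∫ x, ∫ t, g t * primitiveKernel x t ∂volume ∂μ := by
        simp_rw [intervalIntegral_eq_integral_mul_primitiveKernel]
    _ = ∫ t, ∫ x, g t * primitiveKernel x t ∂μ ∂volume := integral_integral_swap hint
    _ = _ := by simp_rw [hinner]

lemma measureReal_Ici_ae_eq_one_sub (μ : Measure ℝ) [IsProbabilityMeasure μ] :
    (fun t => μ.real (Ici t)) =ᵐ[volume] fun t => 1 - μ.real (Iic t) := by
  filter_upwards [meas_le_ae_eq_meas_lt μ volume id] with t ht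
  rw [← probReal_compl_eq_one_sub measurableSet_Iic, compl_Iic]
  exact congrArg ENNReal.toReal ht

lemma lipschitzWith_primitive {g : ℝ → ℝ} {K : NNReal} (hg : AEStronglyMeasurable g volume)
    (hb : ∀ t, ‖g t‖ ≤ K) (a : ℝ) : LipschitzWith K (fun x => ∫ t in a..x, g t) := by
  have hii (x y : ℝ) : IntervalIntegrable g volume x y :=
    (intervalIntegrable_const (c := (K : ℝ))).mono_fun' hg.restrict (ae_of_all _ hb)
  refine LipschitzWith.of_dist_le_mul fun x y => ?_
  rw [dist_eq_norm, intervalIntegral.integral_interval_sub_left (hii a x) (hii a y),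
    Real.dist_eq]
  exact intervalIntegral.norm_integral_le_of_norm_le_const fun t _ => hb t

lemma lipschitzWith_one_iff_abs_sub_le {f : ℝ → ℝ} :
    LipschitzWith 1 f ↔ ∀ x y, |f x - f y| ≤ |x - y| := by
  simp [lipschitzWith_iff_dist_le_mul, Real.dist_eq]

lemma LipschitzWith.integrable_of_integrable_abs {f : ℝ → ℝ} {K : NNReal}
    (hf : LipschitzWith K f) {μ : Measure ℝ} [IsFiniteMeasure μ]
    (hm : Integrable (fun x => |x|) μ) : Integrable f μ := by
  refine Integrable.mono' ((integrable_const |f 0|).add (hm.const_mul K))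
    hf.continuous.aestronglyMeasurable (ae_of_all _ fun x => ?_)
  have h := hf.dist_le_mul x 0
  rw [Real.dist_eq, Real.dist_eq, sub_zero] at h
  rw [Real.norm_eq_abs, Pi.add_apply]
  linarith [abs_sub_abs_le_abs_sub (f x) (f 0)]

section TwoMeasures

variable (μ₁ μ₂ : Measure ℝ) [IsProbabilityMeasure μ₁] [IsProbabilityMeasure μ₂]

theorem integral_primitive_sub_eq_integral_mul_cdf_sub
    (hm₁ : Integrable (fun x => |x|) μ₁) (hm₂ : Integrable (fun x => |x|) μ₂) {g : ℝ → ℝ}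
    (hg : AEStronglyMeasurable g volume) {C : ℝ} (hb : ∀ t, |g t| ≤ C) :
    Integrable (fun t => g t * (μ₂.real (Iic t) - μ₁.real (Iic t))) ∧
      ∫ x, (∫ t in (0 : ℝ)..x, g t) ∂μ₁ - ∫ x, (∫ t in (0 : ℝ)..x, g t) ∂μ₂ =
        ∫ t, g t * (μ₂.real (Iic t) - μ₁.real (Iic t)) := by
  obtain ⟨hi₁, he₁⟩ := integral_primitive_eq_integral_mul_tail μ₁ hm₁ hg hb
  obtain ⟨hi₂, he₂⟩ := integral_primitive_eq_integral_mul_tail μ₂ hm₂ hg hb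
  have hae : (fun t => g t * (μ₁.real (Ici t) - if t ≤ 0 then μ₁.real univ else 0) -
      g t * (μ₂.real (Ici t) - if t ≤ 0 then μ₂.real univ else 0)) =ᵐ[volume]
      fun t => g t * (μ₂.real (Iic t) - μ₁.real (Iic t)) := by
    filter_upwards [measureReal_Ici_ae_eq_one_sub μ₁, measureReal_Ici_ae_eq_one_sub μ₂]
      with t h₁ h₂
    simp only [probReal_univ, h₁, h₂]
    ring
  refine ⟨(hi₁.sub hi₂).congr hae, ?_⟩
  rw [he₁, he₂, ← integral_sub hi₁ hi₂]
  exact integral_congr_ae hae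

lemma integrable_cdf_sub
    (hm₁ : Integrable (fun x => |x|) μ₁) (hm₂ : Integrable (fun x => |x|) μ₂) :
    Integrable (fun t => μ₂.real (Iic t) - μ₁.real (Iic t)) := by
  simpa using (integral_primitive_sub_eq_integral_mul_cdf_sub μ₁ μ₂ hm₁ hm₂
    (aestronglyMeasurable_const (b := (1 : ℝ))) (C := 1) (by simp)).1

theorem integral_sub_integral_le_of_lipschitzWith
    (hm₁ : Integrable (fun x => |x|) μ₁) (hm₂ : Integrable (fun x => |x|) μ₂) {f : ℝ → ℝ}
    (hf : LipschitzWith 1 f) (hf₁ : Integrable f μ₁) (hf₂ : Integrable f μ₂) :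
    ∫ x, f x ∂μ₁ - ∫ x, f x ∂μ₂ ≤ ∫ t, |μ₂.real (Iic t) - μ₁.real (Iic t)| := by
  have hderiv (t : ℝ) : |deriv f t| ≤ 1 := by simpa using norm_deriv_le_of_lipschitz hf
  have hprimitive (x : ℝ) : ∫ t in (0 : ℝ)..x, deriv f t = f x - f 0 :=
    hf.lipschitzOnWith.absolutelyContinuousOnInterval.integral_deriv_eq_sub
  have hintegral (μ : Measure ℝ) [IsProbabilityMeasure μ] (hfμ : Integrable f μ) :
      ∫ x, f x ∂μ = ∫ x, (∫ t in (0 : ℝ)..x, deriv f t) ∂μ + f 0 := by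
    simp_rw [hprimitive]
    rw [integral_sub hfμ (integrable_const _)]
    simp
  obtain ⟨hint, heq⟩ := integral_primitive_sub_eq_integral_mul_cdf_sub μ₁ μ₂ hm₁ hm₂
    (aestronglyMeasurable_deriv f volume) hderiv
  calc ∫ x, f x ∂μ₁ - ∫ x, f x ∂μ₂
      = ∫ t, deriv f t * (μ₂.real (Iic t) - μ₁.real (Iic t)) := by
        rw [hintegral μ₁ hf₁, hintegral μ₂ hf₂, ← heq]
        ring
    _ ≤ ∫ t, |μ₂.real (Iic t) - μ₁.real (Iic t)| :=
        integral_mono hint (integrable_cdf_sub μ₁ μ₂ hm₁ hm₂).abs fun t =>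
          (le_abs_self _).trans
            (by rw [abs_mul]; exact mul_le_of_le_one_left (abs_nonneg _) (hderiv t))

theorem exists_lipschitzWith_integral_sub_integral_eq
    (hm₁ : Integrable (fun x => |x|) μ₁) (hm₂ : Integrable (fun x => |x|) μ₂) :
    ∃ f : ℝ → ℝ, LipschitzWith 1 f ∧ Integrable f μ₁ ∧ Integrable f μ₂ ∧
      ∫ x, f x ∂μ₁ - ∫ x, f x ∂μ₂ = ∫ t, |μ₂.real (Iic t) - μ₁.real (Iic t)| := by
  set D := fun t => μ₂.real (Iic t) - μ₁.real (Iic t)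
  set g := fun t => if 0 ≤ D t then (1 : ℝ) else -1
  have hg : AEStronglyMeasurable g volume :=
    ((measurable_const.ite (measurableSet_le measurable_const measurable_id)
      measurable_const).comp_aemeasurable
        (integrable_cdf_sub μ₁ μ₂ hm₁ hm₂).aemeasurable).aestronglyMeasurable
  have hb (t : ℝ) : |g t| ≤ 1 := by
    simp only [g]
    split_ifs <;> simp
  have hgD (t : ℝ) : g t * D t = |D t| := by
    simp only [g]
    split_ifs with h
    · rw [one_mul, abs_of_nonneg h]
    · rw [neg_one_mul, abs_of_neg (not_le.1 h)]
  have hlip : LipschitzWith 1 (fun x => ∫ t in (0 : ℝ)..x, g t) :=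
    lipschitzWith_primitive hg (by simpa using hb) 0
  refine ⟨_, hlip, hlip.integrable_of_integrable_abs hm₁,
    hlip.integrable_of_integrable_abs hm₂, ?_⟩
  rw [(integral_primitive_sub_eq_integral_mul_cdf_sub μ₁ μ₂ hm₁ hm₂ hg hb).2]
  exact integral_congr_ae (ae_of_all _ hgD)

end TwoMeasures

theorem wasserstein_on_real_eq_integral_cdf_diff_general
    (μ₁ μ₂ : Measure ℝ) [IsProbabilityMeasure μ₁] [IsProbabilityMeasure μ₂]
    (hm₁ : Integrable (fun x => |x|) μ₁) (hm₂ : Integrable (fun x => |x|) μ₂) :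
    (⨆ f : {f : ℝ → ℝ //
        (∀ x y, |f x - f y| ≤ |x - y|) ∧ Integrable f μ₁ ∧ Integrable f μ₂},
      ENNReal.ofReal ((∫ x, f.1 x ∂μ₁) - ∫ x, f.1 x ∂μ₂)) =
      ENNReal.ofReal (∫ z, |(μ₁ (Set.Iic z)).toReal - (μ₂ (Set.Iic z)).toReal|) := by
  simp_rw [abs_sub_comm (μ₁ (Iic _)).toReal, ← measureReal_def]
  apply le_antisymm
  · refine iSup_le fun ⟨f, hf, hf₁, hf₂⟩ => ENNReal.ofReal_le_ofReal ?_
    exact integral_sub_integral_le_of_lipschitzWith μ₁ μ₂ hm₁ hm₂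
      (lipschitzWith_one_iff_abs_sub_le.2 hf) hf₁ hf₂
  · obtain ⟨f, hf, hf₁, hf₂, heq⟩ := exists_lipschitzWith_integral_sub_integral_eq μ₁ μ₂ hm₁ hm₂
    exact le_iSup_of_le ⟨f, lipschitzWith_one_iff_abs_sub_le.1 hf, hf₁, hf₂⟩
      (ENNReal.ofReal_le_ofReal heq.ge)

/-- for Borel probability measures `μ₁, μ₂` on `ℝ` with finite first
moments and no singular continuous part (each is a countable weighted sum of Dirac
measures plus a measure absolutely continuous with respect to Lebesgue measure), the
order-1 Wasserstein distance equals `∫ |F₁(z) − F₂(z)| dz`, where `Fᵢ` is the cumulative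
distribution function of `μᵢ`. -/
theorem wasserstein_on_real_eq_integral_cdf_diff
    (μ₁ μ₂ : Measure ℝ) [IsProbabilityMeasure μ₁] [IsProbabilityMeasure μ₂]
    (hm₁ : Integrable (fun x => |x|) μ₁) (hm₂ : Integrable (fun x => |x|) μ₂)
    (hd₁ : ∃ (a : ℕ → ℝ) (w : ℕ → ENNReal) (ν : Measure ℝ),
      μ₁ = Measure.sum (fun k => w k • Measure.dirac (a k)) + ν ∧ ν ≪ volume)
    (hd₂ : ∃ (a : ℕ → ℝ) (w : ℕ → ENNReal) (ν : Measure ℝ),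
      μ₂ = Measure.sum (fun k => w k • Measure.dirac (a k)) + ν ∧ ν ≪ volume) :
    (⨆ f : {f : ℝ → ℝ //
        (∀ x y, |f x - f y| ≤ |x - y|) ∧ Integrable f μ₁ ∧ Integrable f μ₂},
      ENNReal.ofReal ((∫ x, f.1 x ∂μ₁) - ∫ x, f.1 x ∂μ₂)) =
      ENNReal.ofReal (∫ z, |(μ₁ (Set.Iic z)).toReal - (μ₂ (Set.Iic z)).toReal|) :=
  wasserstein_on_real_eq_integral_cdf_diff_general μ₁ μ₂ hm₁ hm₂
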